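/- arXiv:1911.08027 — 2 statements merged into one kernel-verified Lean document; each statement's English description precedes it below -/
import Mathlib

section
/- In the graph model on subsets of ℕ, define S to be the set of all codes π(x, π(y, π(z, w))) such that there exists a finite set a with: some z₁ ⊆ e_z satisfies π(z₁, π(a, w)) ∈ e_x, and for every c ∈ e_a there is z₂ ⊆ e_z with π(z₂, c) ∈ e_y. Then for all X, Y, Z ⊆ ℕ, ((S · X) · Y) · Z = (X · Z) · (Y · Z). -/
/-!
Both sides are built from finite approximations. Unfolding the three applications, `n` lies in
`S · X · Y · Z` iff there are finite `x ⊆ X`, `y ⊆ Y`, `z ⊆ Z` with `n ∈ (x · z) · (y · z)`;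
monotonicity of application gives `⊆`. Conversely, application is continuous: a finite part of
`X · Y` already lies in `x · y` for finite `x ⊆ X`, `y ⊆ Y`. Applying this to the finite `a` and to
the single pair `π(a, n)` witnessing `n ∈ (X · Z) · (Y · Z)`, and merging the two finite parts of
`Z`, gives `⊇`.
-/

def ek (k : ℕ) : Set ℕ := {j | Nat.testBit k j}

def gapp (X Y : Set ℕ) : Set ℕ := {n | ∃ k, ek k ⊆ Y ∧ Nat.pair k n ∈ X}

/-- The graph-model S combinator: all codes `π(x, π(y, π(z, w)))` such that for some
finite set `a`: some `z₁ ⊆ e_z` has `π(z₁, π(a, w)) ∈ e_x`, and every `c ∈ e_a`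
has some `z₂ ⊆ e_z` with `π(z₂, c) ∈ e_y`. -/
def Sgraph : Set ℕ :=
  {p | ∃ x y z w a, p = Nat.pair x (Nat.pair y (Nat.pair z w)) ∧
    (∃ z₁, ek z₁ ⊆ ek z ∧ Nat.pair z₁ (Nat.pair a w) ∈ ek x) ∧
    (∀ c ∈ ek a, ∃ z₂, ek z₂ ⊆ ek z ∧ Nat.pair z₂ c ∈ ek y)}

section Codes

@[simp]
lemma mem_ek {k j : ℕ} : j ∈ ek k ↔ k.testBit j := Iff.rfl

@[simp]
lemma ek_zero : ek 0 = ∅ := by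
  ext j
  simp

@[simp]
lemma ek_two_pow (m : ℕ) : ek (2 ^ m) = {m} := by
  ext j
  simp [Nat.testBit_two_pow, eq_comm]

lemma ek_lor (m n : ℕ) : ek (m ||| n) = ek m ∪ ek n := by
  ext j
  simp

lemma ek_subset_Iio (k : ℕ) : ek k ⊆ Set.Iio k := fun _ hj =>
  Nat.lt_of_lt_of_le Nat.lt_two_pow_self (Nat.ge_two_pow_of_testBit hj)

lemma ek_finite (k : ℕ) : (ek k).Finite :=
  (Set.finite_Iio k).subset (ek_subset_Iio k)

end Codes

section Application

variable {X X' Y Y' : Set ℕ}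

lemma gapp_mono (hX : X ⊆ X') (hY : Y ⊆ Y') : gapp X Y ⊆ gapp X' Y' :=
  fun _ ⟨k, hkY, hkX⟩ => ⟨k, hkY.trans hY, hX hkX⟩

lemma exists_ek_subset_of_subset_gapp {s : Set ℕ} (hs : s.Finite) (h : s ⊆ gapp X Y) :
    ∃ x y, ek x ⊆ X ∧ ek y ⊆ Y ∧ s ⊆ gapp (ek x) (ek y) := by
  induction s, hs using Set.Finite.induction_on with
  | empty => exact ⟨0, 0, by simp, by simp, Set.empty_subset _⟩
  | @insert n s _ _ ih =>
    obtain ⟨x, y, hx, hy, hs⟩ := ih ((Set.subset_insert n s).trans h)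
    obtain ⟨k, hkY, hkX⟩ := h (Set.mem_insert n s)
    refine ⟨x ||| 2 ^ Nat.pair k n, y ||| k, ?_, ?_, Set.insert_subset ?_ ?_⟩
    · rw [ek_lor, ek_two_pow]
      exact Set.union_subset hx (Set.singleton_subset_iff.2 hkX)
    · rw [ek_lor]
      exact Set.union_subset hy hkY
    · exact ⟨k, by simp [ek_lor], by simp [ek_lor]⟩
    · exact hs.trans (gapp_mono (by simp [ek_lor]) (by simp [ek_lor]))

end Application

lemma pair_mem_Sgraph_iff {x y z w : ℕ} :
    Nat.pair x (Nat.pair y (Nat.pair z w)) ∈ Sgraph ↔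
      w ∈ gapp (gapp (ek x) (ek z)) (gapp (ek y) (ek z)) := by
  simp only [Sgraph, gapp, Set.mem_ofPred_eq, Nat.pair_eq_pair]
  constructor
  · rintro ⟨x, y, z, w, a, ⟨rfl, rfl, rfl, rfl⟩, hx, hy⟩
    exact ⟨a, hy, hx⟩
  · rintro ⟨a, hy, hx⟩
    exact ⟨x, y, z, w, a, ⟨rfl, rfl, rfl, rfl⟩, hx, hy⟩

lemma mem_gapp_gapp_gapp_Sgraph_iff {X Y Z : Set ℕ} {n : ℕ} :
    n ∈ gapp (gapp (gapp Sgraph X) Y) Z ↔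
      ∃ x y z, ek x ⊆ X ∧ ek y ⊆ Y ∧ ek z ⊆ Z ∧
        n ∈ gapp (gapp (ek x) (ek z)) (gapp (ek y) (ek z)) := by
  constructor
  · rintro ⟨z, hz, y, hy, x, hx, hS⟩
    exact ⟨x, y, z, hx, hy, hz, pair_mem_Sgraph_iff.1 hS⟩
  · rintro ⟨x, y, z, hx, hy, hz, hn⟩
    exact ⟨z, hz, y, hy, x, hx, pair_mem_Sgraph_iff.2 hn⟩

/-- `S · X · Y · Z = (X · Z) · (Y · Z)` in the graph model. -/
theorem Sgraph_spec (X Y Z : Set ℕ) :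
    gapp (gapp (gapp Sgraph X) Y) Z = gapp (gapp X Z) (gapp Y Z) := by
  ext n
  rw [mem_gapp_gapp_gapp_Sgraph_iff]
  constructor
  · rintro ⟨x, y, z, hx, hy, hz, hn⟩
    exact gapp_mono (gapp_mono hx hz) (gapp_mono hy hz) hn
  · rintro ⟨a, ha, hna⟩
    obtain ⟨y, z₂, hy, hz₂, ha⟩ := exists_ek_subset_of_subset_gapp (ek_finite a) ha
    obtain ⟨x, z₁, hx, hz₁, hna⟩ :=
      exists_ek_subset_of_subset_gapp (Set.finite_singleton _) (Set.singleton_subset_iff.2 hna)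
    refine ⟨x, y, z₁ ||| z₂, hx, hy, by simpa [ek_lor] using ⟨hz₁, hz₂⟩, a, ?_, ?_⟩
    · exact ha.trans (gapp_mono subset_rfl (by simp [ek_lor]))
    · exact gapp_mono subset_rfl (by simp [ek_lor]) (hna rfl)
end

section
/- In the graph model on subsets of ℕ, the collection of computably enumerable subsets of ℕ is closed under application: if X and Y are c.e. subsets of ℕ, then X · Y = {n | ∃ k, e_k ⊆ Y ∧ π(k, n) ∈ X} is c.e. -/
/-- `X ⊆ ℕ` is computably enumerable: it is the domain of a partial computable
function. -/
def CE (X : Set ℕ) : Prop := ∃ f : ℕ →. ℕ, Partrec f ∧ ∀ n, n ∈ X ↔ (f n).Dom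

open Nat.Partrec (Code)
open Nat.Partrec.Code Encodable

theorem primrec_testBit : Primrec₂ Nat.testBit := by
  have hpow : Primrec₂ ((· ^ ·) : ℕ → ℕ → ℕ) := Primrec₂.unpaired'.1 Nat.Primrec.pow
  have : PrimrecRel fun k j : ℕ => k / 2 ^ j % 2 = 1 :=
    Primrec.eq.comp₂
      (Primrec.nat_mod.comp₂ (Primrec.nat_div.comp₂ .left (hpow.comp₂ (.const 2) .right))
        (.const 2))
      (.const 1)
  exact this.decide.of_eq fun _ _ => Nat.testBit_eq_decide_div_mod_eq.symm

theorem lt_of_testBit_eq_true {k j : ℕ} (h : k.testBit j = true) : j < k :=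
  (Nat.lt_two_pow_self).trans_le (Nat.ge_two_pow_of_testBit h)

theorem ek_subset_iff {k : ℕ} {Y : Set ℕ} :
    ek k ⊆ Y ↔ ∀ j < k, k.testBit j = true → j ∈ Y :=
  ⟨fun h _ _ hj => h hj, fun h j hj => h j (lt_of_testBit_eq_true hj) hj⟩

theorem exists_forall_lt_of_monotone {P : ℕ → ℕ → Prop} (hP : ∀ j, Monotone (P j))
    {k : ℕ} (h : ∀ j < k, ∃ t, P j t) : ∃ t, ∀ j < k, P j t := by
  induction k with
  | zero => exact ⟨0, by simp⟩
  | succ k ih =>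
    obtain ⟨t, ht⟩ := ih fun j hj => h j (hj.trans k.lt_succ_self)
    obtain ⟨u, hu⟩ := h k k.lt_succ_self
    refine ⟨max t u, fun j hj => ?_⟩
    rcases Nat.lt_succ_iff_lt_or_eq.1 hj with hj | rfl
    · exact hP j (le_max_left t u) (ht j hj)
    · exact hP j (le_max_right t u) hu

theorem monotone_evaln_isSome (c : Code) (n : ℕ) :
    Monotone fun t => (evaln t c n).isSome = true := fun _ _ hst h => by
  obtain ⟨x, hx⟩ := Option.isSome_iff_exists.1 h
  exact Option.isSome_iff_exists.2 ⟨x, evaln_mono hst hx⟩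

theorem eval_dom_iff_exists_evaln_isSome (c : Code) (n : ℕ) :
    (eval c n).Dom ↔ ∃ t, (evaln t c n).isSome = true := by
  simp only [Part.dom_iff_mem, evaln_complete, Option.isSome_iff_exists]
  exact exists_comm

theorem primrecRel_evaln_isSome (c : Code) :
    PrimrecRel fun n t => (evaln t c n).isSome = true :=
  Primrec.eq.comp (Primrec.option_isSome.comp
    (primrec_evaln.comp ((Primrec.snd.pair (.const c)).pair .fst))) (.const true)

theorem CE.exists_code {X : Set ℕ} (hX : CE X) :
    ∃ c : Code, ∀ n, n ∈ X ↔ ∃ t, (evaln t c n).isSome = true := by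
  obtain ⟨f, hf, hXf⟩ := hX
  obtain ⟨c, rfl⟩ := Code.exists_code.1 (Partrec.nat_iff.1 hf)
  exact ⟨c, fun n => (hXf n).trans (eval_dom_iff_exists_evaln_isSome c n)⟩

theorem CE.of_exists_primrecRel {α : Type*} [Primcodable α] {p : ℕ → α → Prop}
    (hp : PrimrecRel p) : CE {n | ∃ a, p n a} := by
  classical
  refine ⟨fun n => Nat.rfindOpt fun s =>
    ((decode s : Option α).bind (Option.guard fun a => p n a)).map encode,
    Partrec.rfindOpt ?_, fun n => ?_⟩
  · refine Primrec.to_comp <| Primrec.option_map ?_ (Primrec.encode.comp .snd).to₂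
    exact Primrec.option_bind (Primrec.decode.comp .snd)
      (Primrec.option_guard (hp.comp₂ ((Primrec.fst.comp .fst).comp₂ .left) .right) .snd)
  · simp only [Set.mem_ofPred_eq, Nat.rfindOpt_dom]
    constructor
    · rintro ⟨a, ha⟩
      exact ⟨encode a, encode a, by simp [ha]⟩
    · rintro ⟨s, m, hm⟩
      simp only [Option.mem_def, Option.map_eq_some_iff, Option.bind_eq_some_iff,
        Option.guard_eq_some_iff] at hm
      obtain ⟨_, ⟨a, -, rfl, ha⟩, -⟩ := hm
      exact ⟨a, of_decide_eq_true ha⟩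

theorem mem_gapp_iff_exists_stage {X Y : Set ℕ} {SX SY : ℕ → ℕ → Prop}
    (hSX : ∀ n, Monotone (SX n)) (hSY : ∀ n, Monotone (SY n))
    (hX : ∀ n, n ∈ X ↔ ∃ t, SX n t) (hY : ∀ n, n ∈ Y ↔ ∃ t, SY n t) {n : ℕ} :
    n ∈ gapp X Y ↔
      ∃ k t, SX (Nat.pair k n) t ∧ ∀ j < k, k.testBit j = true → SY j t := by
  simp only [gapp, Set.mem_ofPred_eq, ek_subset_iff, hX, hY]
  refine exists_congr fun k => ⟨fun ⟨hkY, tX, hkX⟩ => ?_, fun ⟨t, hkX, hkY⟩ => ?_⟩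
  · have hstageY (j : ℕ) (hj : j < k) : ∃ t, k.testBit j = true → SY j t := by
      by_cases hb : k.testBit j = true
      · exact (hkY j hj hb).imp fun _ h _ => h
      · exact ⟨0, fun h => absurd h hb⟩
    obtain ⟨tY, htY⟩ := exists_forall_lt_of_monotone
      (P := fun j t => k.testBit j = true → SY j t)
      (fun j _ _ hst h hj => hSY j hst (h hj)) hstageY
    exact ⟨max tX tY, hSX _ (le_max_left tX tY) hkX,
      fun j hj hb => hSY j (le_max_right tX tY) (htY j hj hb)⟩
  · exact ⟨fun j hj hb => ⟨t, hkY j hj hb⟩, t, hkX⟩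

theorem primrecRel_gapp_stage (cX cY : Code) :
    PrimrecRel fun n (kt : ℕ × ℕ) => (evaln kt.2 cX (Nat.pair kt.1 n)).isSome = true ∧
      ∀ j < kt.1, kt.1.testBit j = true → (evaln kt.2 cY j).isSome = true := by
  have hX : PrimrecRel fun n (kt : ℕ × ℕ) =>
      (evaln kt.2 cX (Nat.pair kt.1 n)).isSome = true :=
    (primrecRel_evaln_isSome cX).comp (Primrec₂.natPair.comp (Primrec.fst.comp .snd) .fst)
      (Primrec.snd.comp .snd)
  have hbit : PrimrecRel fun j (kt : ℕ × ℕ) => kt.1.testBit j = true :=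
    Primrec.eq.comp (primrec_testBit.comp (Primrec.fst.comp .snd) .fst) (.const true)
  have hY : PrimrecRel fun j (kt : ℕ × ℕ) =>
      kt.1.testBit j = true → (evaln kt.2 cY j).isSome = true :=
    (hbit.not.or ((primrecRel_evaln_isSome cY).comp .fst (Primrec.snd.comp .snd))).of_eq
      fun _ => imp_iff_not_or.symm
  have hall : PrimrecRel fun (_ : ℕ) (kt : ℕ × ℕ) =>
      ∀ j < kt.1, kt.1.testBit j = true → (evaln kt.2 cY j).isSome = true :=
    (hY.forall_mem_list.comp (Primrec.list_range.comp (Primrec.fst.comp .snd)) .snd).of_eq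
      fun _ => by simp only [List.mem_range]
  exact hX.and hall

/-- The c.e. subsets of ℕ are closed under graph-model application. -/
theorem ce_closed_under_gapp (X Y : Set ℕ) (hX : CE X) (hY : CE Y) :
    CE (gapp X Y) := by
  obtain ⟨cX, hcX⟩ := hX.exists_code
  obtain ⟨cY, hcY⟩ := hY.exists_code
  convert CE.of_exists_primrecRel (primrecRel_gapp_stage cX cY) using 1
  ext n
  simp only [Set.mem_ofPred_eq, Prod.exists, mem_gapp_iff_exists_stage
    (monotone_evaln_isSome cX) (monotone_evaln_isSome cY) hcX hcY]
end
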